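/- Let q ≥ 2, t ∈ ℝⁿ_{≥0}, y ∈ ℝⁿ, and let T be the diagonal n×n matrix with T_{ii} = t_i^{(q−2)/2}. Then ‖Ty‖₂² + ‖y‖_q^q ≤ 2·Σ_{i∈[n]} γ_q(t_i, y_i) ≤ q·( ‖Ty‖₂² + ‖y‖_q^q ). -/

import Mathlib

/-!
Both inequalities hold coordinatewise. With `A = t^(q-2) y²` and `B = |y|^q`, the identity
`|y|^q = |y|^(q-2) y²` shows `B ≤ A` when `|y| ≤ t` and `A ≤ B`, `t^q ≤ B` when `t < |y|`.
In the first case `2γ = qA`, in the second `2γ = 2B + (q-2) t^q`, and both lie between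
`A + B` and `q (A + B)`.
-/

open Matrix Finset

/-- The smoothed `q`-norm function `γ_q(t,y)`. -/
noncomputable def gammaFn (q t y : ℝ) : ℝ :=
  if |y| ≤ t then (q / 2) * t ^ (q - 2) * y ^ 2
  else |y| ^ q + (q / 2 - 1) * t ^ q

lemma abs_rpow_eq_abs_rpow_sub_two_mul_sq {q : ℝ} (hq : q ≠ 0) (y : ℝ) :
    |y| ^ q = |y| ^ (q - 2) * y ^ 2 := by
  rw [← sq_abs, ← Real.rpow_natCast, ← Real.rpow_add' (abs_nonneg y) (by simpa using hq)]
  norm_num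

lemma abs_rpow_le_rpow_sub_two_mul_sq {q t y : ℝ} (hq : 2 ≤ q) (hyt : |y| ≤ t) :
    |y| ^ q ≤ t ^ (q - 2) * y ^ 2 := by
  rw [abs_rpow_eq_abs_rpow_sub_two_mul_sq (by linarith) y]
  gcongr

lemma rpow_sub_two_mul_sq_le_abs_rpow {q t y : ℝ} (hq : 2 ≤ q) (ht : 0 ≤ t) (hty : t ≤ |y|) :
    t ^ (q - 2) * y ^ 2 ≤ |y| ^ q := by
  rw [abs_rpow_eq_abs_rpow_sub_two_mul_sq (by linarith) y]
  gcongr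

lemma le_two_mul_gammaFn {q t y : ℝ} (hq : 2 ≤ q) (ht : 0 ≤ t) :
    t ^ (q - 2) * y ^ 2 + |y| ^ q ≤ 2 * gammaFn q t y := by
  unfold gammaFn
  split_ifs with hyt
  · have hA : 0 ≤ t ^ (q - 2) * y ^ 2 := by positivity
    nlinarith [abs_rpow_le_rpow_sub_two_mul_sq hq hyt]
  · have htq : 0 ≤ t ^ q := by positivity
    nlinarith [rpow_sub_two_mul_sq_le_abs_rpow hq ht (not_le.mp hyt).le]

lemma two_mul_gammaFn_le {q t y : ℝ} (hq : 2 ≤ q) (ht : 0 ≤ t) :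
    2 * gammaFn q t y ≤ q * (t ^ (q - 2) * y ^ 2 + |y| ^ q) := by
  unfold gammaFn
  split_ifs with hyt
  · have hB : 0 ≤ |y| ^ q := by positivity
    nlinarith
  · have hty := (not_le.mp hyt).le
    have hA : 0 ≤ t ^ (q - 2) * y ^ 2 := by positivity
    nlinarith [Real.rpow_le_rpow ht hty (by linarith : 0 ≤ q)]

lemma rpow_div_two_sq {x : ℝ} (hx : 0 ≤ x) (p : ℝ) : (x ^ (p / 2)) ^ 2 = x ^ p := by
  rw [← Real.rpow_mul_natCast hx]
  norm_num

/-- for `q ≥ 2`, `t ≥ 0`, and `T = diag(t_i^{(q−2)/2})`: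
`‖Ty‖₂² + ‖y‖_q^q ≤ 2 Σ_i γ_q(t_i, y_i) ≤ q(‖Ty‖₂² + ‖y‖_q^q)`. -/
theorem stmt12 (n : ℕ) (q : ℝ) (hq : 2 ≤ q)
    (t y : Fin n → ℝ) (ht : ∀ i, 0 ≤ t i) :
    (∑ i, ((Matrix.diagonal (fun i => t i ^ ((q - 2) / 2))).mulVec y) i ^ 2)
        + (∑ i, |y i| ^ q) ≤ 2 * ∑ i, gammaFn q (t i) (y i) ∧
      2 * ∑ i, gammaFn q (t i) (y i)
        ≤ q * ((∑ i, ((Matrix.diagonal (fun i => t i ^ ((q - 2) / 2))).mulVec y) i ^ 2)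
            + (∑ i, |y i| ^ q)) := by
  have hTy : ∀ i, ((Matrix.diagonal (fun i => t i ^ ((q - 2) / 2))).mulVec y) i ^ 2
      = t i ^ (q - 2) * y i ^ 2 := fun i => by
    rw [mulVec_diagonal, mul_pow, rpow_div_two_sq (ht i)]
  simp only [hTy, ← sum_add_distrib, mul_sum]
  exact ⟨sum_le_sum fun i _ => le_two_mul_gammaFn hq (ht i),
    sum_le_sum fun i _ => two_mul_gammaFn_le hq (ht i)⟩
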